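/- Let n be a natural number and A a left brace of cardinality p^n where p is a prime number with p > n+1. Then pA = {p·a : a ∈ A} is a sub-brace of A, and every product under the operation * (with any placement of brackets) of p−1 elements of pA equals zero. Moreover, every product under * (any bracketing) of elements of A in which at least i of the factors belong to pA lies in p^i·A; consequently every such product in which p−1 of the factors belong to pA equals zero. -/

import Mathlib

universe u

/-- A left brace: `(A,+)` abelian group, `(A,∘)` a group, with
`a∘(b+c)+a = a∘b+a∘c`. -/
structure LeftBrace (A : Type u) [AddCommGroup A] where
  circ : A → A → A
  one : A
  inv : A → A
  circ_assoc : ∀ a b c : A, circ (circ a b) c = circ a (circ b c)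
  one_circ : ∀ a : A, circ one a = a
  circ_one : ∀ a : A, circ a one = a
  inv_circ : ∀ a : A, circ (inv a) a = one
  circ_add : ∀ a b c : A, circ a (b + c) + a = circ a b + circ a c

/-- `a*b = a∘b - a - b`. -/
def LeftBrace.star {A : Type u} [AddCommGroup A] (B : LeftBrace A) (a b : A) : A :=
  B.circ a b - a - b

/-- `ann(k) = {a : k•a = 0}`, as an additive subgroup. -/
def annSub (A : Type u) [AddCommGroup A] (k : ℕ) : AddSubgroup A where
  carrier := {a : A | k • a = 0}
  zero_mem' := by simp
  add_mem' := by
    intro a b ha hb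
    have ha' : k • a = 0 := ha
    have hb' : k • b = 0 := hb
    show k • (a + b) = 0
    rw [smul_add, ha', hb', add_zero]
  neg_mem' := by
    intro a ha
    have ha' : k • a = 0 := ha
    show k • (-a) = 0
    rw [smul_neg, ha', neg_zero]

/-- The coset `[a]` of `a` in `A/ann(k)`. -/
def qmk {A : Type u} [AddCommGroup A] (k : ℕ) (a : A) : A ⧸ annSub A k :=
  QuotientAddGroup.mk a

/-- Evaluation of a non-associative word under a binary operation `op`,
substituting `f i` for the variable `i`. -/
def wEval {α : Type*} {β : Type*} (op : β → β → β) (f : α → β) : FreeMagma α → β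
  | FreeMagma.of a => f a
  | FreeMagma.mul x y => op (wEval op f x) (wEval op f y)

/-- The list of leaves (occurrences of variables, left to right) of a word. -/
def wLeaves {α : Type*} : FreeMagma α → List α
  | FreeMagma.of a => [a]
  | FreeMagma.mul x y => wLeaves x ++ wLeaves y

/-- The last (rightmost) variable of a word. -/
def wLast {α : Type*} : FreeMagma α → α
  | FreeMagma.of a => a
  | FreeMagma.mul _ y => wLast y

/-- The number of occurrences of the variable `a` in a word. -/
def wCount {α : Type*} [DecidableEq α] (a : α) : FreeMagma α → ℕ
  | FreeMagma.of b => if b = a then 1 else 0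
  | FreeMagma.mul x y => wCount a x + wCount a y

/-- The length (number of variable occurrences) of a word. -/
def wLen {α : Type*} : FreeMagma α → ℕ
  | FreeMagma.of _ => 1
  | FreeMagma.mul x y => wLen x + wLen y

/-- Left-normed product `a₁·(a₂·(⋯(aₘ·b)⋯))`. -/
def leftProd {Q : Type*} (mul : Q → Q → Q) : List Q → Q → Q
  | [], b => b
  | a :: l, b => mul a (leftProd mul l b)

/-- `circPow B a k` is the product of `k` copies of `a` under `∘`. -/
def circPow {A : Type u} [AddCommGroup A] (B : LeftBrace A) (a : A) : ℕ → A
  | 0 => B.one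
  | k + 1 => B.circ a (circPow B a k)

/-- `eSeq B a (i-1)` is `a_i`, where `a_1 = a` and `a_{i+1} = a * a_i`. -/
def eSeq {A : Type u} [AddCommGroup A] (B : LeftBrace A) (a : A) : ℕ → A
  | 0 => a
  | i + 1 => B.star a (eSeq B a i)

/-- `starIter B a b (i-1)` is `e_i`, where `e_1 = a*b` and `e_{i+1} = a*e_i`. -/
def starIter {A : Type u} [AddCommGroup A] (B : LeftBrace A) (a b : A) : ℕ → A
  | 0 => B.star a b
  | i + 1 => B.star a (starIter B a b i)

/-- `iterOp op u v i` is `u ⊙ (u ⊙ (⋯ (u ⊙ v)))` with `i` applications of `u ⊙ ·`. -/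
def iterOp {Q : Type*} (op : Q → Q → Q) (u v : Q) : ℕ → Q
  | 0 => v
  | i + 1 => op u (iterOp op u v i)

/-- `f(a) = Σ_{i=1}^{p−1} (C(p−1,i−1)/i)·e_i` where `e_1 = a`, `e_{i+1} = a*e_i`. -/
def fMap {A : Type u} [AddCommGroup A] (B : LeftBrace A) (p : ℕ) (a : A) : A :=
  ∑ i ∈ Finset.Icc 1 (p - 1), (Nat.choose (p - 1) (i - 1) / i) • eSeq B a (i - 1)

/-- `braceChainAux B (i-1)` is `A^i`: `A^1 = A`, `A^{i+1}` the additive subgroup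
generated by `{x*y : x ∈ A, y ∈ A^i}`. -/
def braceChainAux {A : Type u} [AddCommGroup A] (B : LeftBrace A) : ℕ → AddSubgroup A
  | 0 => ⊤
  | i + 1 => AddSubgroup.closure {z : A | ∃ x : A, ∃ y ∈ braceChainAux B i, z = B.star x y}

/-- `dSeq B a b i = (d_i, d_i')`: `d_0 = a`, `d_0' = b`, `d_{i+1} = d_i + d_i'`,
`d_{i+1}' = d_i * d_i'`. -/
def dSeq {A : Type u} [AddCommGroup A] (B : LeftBrace A) (a b : A) : ℕ → A × A
  | 0 => (a, b)
  | i + 1 => ((dSeq B a b i).1 + (dSeq B a b i).2, B.star (dSeq B a b i).1 (dSeq B a b i).2)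

/-!
The circle group `(A, ∘)` is a `p`-group acting on `(A, +)` by `λ_a x = a ∘ x - a`, and
`a * b = (λ_a - 1) b`. Its fixed-point series `0 = F₀ ≤ F₁ ≤ ⋯` grows strictly until it
reaches `A` (a `p`-group acting on the nonzero `p`-group `A ⧸ Fᵢ` fixes a nonzero point), so `F_n = A` and `(λ_a - 1)^n = 0`; as `n < p`, every `λ_a - 1` vanishes to order
`p - 1`. Expanding `b^{∘p} = ∑_{i<p} λ_b^i b` binomially gives `b^{∘p} = p • (b + w)` with `w`
one level lower than `b` in the series, hence `p • b = b^{∘p} ∘ (p • v)` with `v` one level lower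
too, and `λ_{p • b} = λ_b^p λ_{p • v}`. By induction on `t` and on the level of `b`, this gives
`λ_{p^t • y} = 1 + p^t • ψ` for an additive endomorphism `ψ`, so `p^j A * p^k A ⊆ p^{j+k} A`.
A `*`-product with `i` factors in `pA` therefore lies in `p^i A`, which is `0` once `i ≥ p - 1 ≥ n`.
-/

open Finset

section RingLemmas

variable {R : Type*} [Ring R]

theorem one_add_pow_eq_sum (x : R) (k : ℕ) :
    (1 + x) ^ k = ∑ j ∈ range (k + 1), k.choose j • x ^ j := by
  rw [add_comm, (Commute.one_right x).add_pow]
  refine sum_congr rfl fun j _ => ?_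
  rw [one_pow, mul_one, nsmul_eq_mul, Nat.cast_comm]

theorem sum_range_one_add_pow (x : R) (k : ℕ) :
    ∑ i ∈ range k, (1 + x) ^ i = ∑ j ∈ range k, k.choose (j + 1) • x ^ j := by
  induction k with
  | zero => simp
  | succ k ih =>
    rw [sum_range_succ, ih, one_add_pow_eq_sum]
    simp only [sum_range_succ _ k, Nat.choose_succ_succ, Nat.choose_self, Nat.choose_succ_self,
      add_smul, sum_add_distrib]
    abel

theorem exists_one_add_smul_mul (m : ℕ) (ψ₁ ψ₂ : R) :
    ∃ χ : R, (1 + m • ψ₁) * (1 + m • ψ₂) = 1 + m • χ :=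
  ⟨ψ₁ + ψ₂ + m • (ψ₁ * ψ₂), by
    simp only [mul_add, add_mul, mul_one, one_mul, smul_add, smul_mul_smul_comm, mul_smul, add_assoc]⟩

theorem exists_one_add_smul_pow_prime {p : ℕ} (hp : p.Prime) (t : ℕ) (ψ : R)
    (h : ψ ^ p = 0 ∨ 1 ≤ t) : ∃ χ : R, (1 + p ^ t • ψ) ^ p = 1 + p ^ (t + 1) • χ := by
  have hterm : ∀ j ∈ Ico 1 (p + 1), p.choose j • (p ^ t • ψ) ^ j
      = p ^ (t + 1) • ((p.choose j * p ^ (t * j) / p ^ (t + 1)) • ψ ^ j) := by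
    intro j hj
    obtain ⟨hj1, hjp⟩ := mem_Ico.1 hj
    rw [smul_pow, smul_smul, smul_smul, ← pow_mul, mul_comm t j]
    rcases Nat.lt_or_ge j p with hjp' | hjp'
    · rw [Nat.mul_div_cancel']
      rw [pow_succ', mul_comm j t]
      exact mul_dvd_mul (hp.dvd_choose_self (by omega) hjp')
        (pow_dvd_pow p (Nat.le_mul_of_pos_right t hj1))
    · obtain rfl : p = j := by omega
      rcases h with hψ | ht
      · simp [hψ]
      · rw [Nat.mul_div_cancel']
        exact Dvd.dvd.mul_left (pow_dvd_pow p (by nlinarith [hp.two_le])) _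
  refine ⟨∑ j ∈ Ico 1 (p + 1), (p.choose j * p ^ (t * j) / p ^ (t + 1)) • ψ ^ j, ?_⟩
  rw [one_add_pow_eq_sum, range_eq_Ico, sum_eq_sum_Ico_succ_bot (by omega), Nat.choose_zero_right,
    pow_zero, one_smul, smul_sum, sum_congr rfl hterm]

end RingLemmas

theorem AddSubgroup.eq_top_of_lt_succ {M : Type*} [AddGroup M] {p n : ℕ} (hp : p.Prime)
    (hM : Nat.card M = p ^ n) (F : ℕ → AddSubgroup M) (hmono : ∀ i, F i ≤ F (i + 1))
    (hlt : ∀ i, F i ≠ ⊤ → F i < F (i + 1)) : F n = ⊤ := by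
  have key : ∀ i, F i = ⊤ ∨ (F i).index * p ^ i ∣ p ^ n := by
    intro i
    induction i with
    | zero => exact .inr (by rw [pow_zero, mul_one, ← hM]; exact (F 0).index_dvd_card)
    | succ i ih =>
      by_cases htop : F i = ⊤
      · exact .inl (top_le_iff.1 (htop ▸ hmono i))
      have hdvd := ih.resolve_left htop
      have hrel := AddSubgroup.relIndex_mul_index (hmono i)
      obtain ⟨c, -, hc⟩ := (Nat.dvd_prime_pow hp).1
        ((Dvd.intro _ hrel).trans (dvd_of_mul_right_dvd hdvd))
      have hc0 : c ≠ 0 := by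
        rintro rfl
        exact (hlt i htop).not_ge (AddSubgroup.relIndex_eq_one.1 (by rw [hc, pow_zero]))
      refine .inr ?_
      calc (F (i + 1)).index * p ^ (i + 1) = (F (i + 1)).index * p ^ i * p := by ring
        _ ∣ (F (i + 1)).index * p ^ i * (F i).relIndex (F (i + 1)) :=
          mul_dvd_mul_left _ (hc ▸ dvd_pow_self p hc0)
        _ = (F i).index * p ^ i := by rw [← hrel]; ring
        _ ∣ p ^ n := hdvd
  refine (key n).elim id fun h => AddSubgroup.index_eq_one.1 (Nat.dvd_one.1 ?_)
  exact Nat.dvd_of_mul_dvd_mul_right (pow_pos hp.pos n) (by rwa [one_mul])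

section FixedSeries

variable {G M : Type*} [Group G] [AddCommGroup M]

def fixedSeries (ρ : G →* AddMonoid.End M) : ℕ → AddSubgroup M
  | 0 => ⊥
  | i + 1 => ⨅ g, (fixedSeries ρ i).comap (ρ g - 1)

abbrev quotientMulAction (ρ : G →* AddMonoid.End M) (N : AddSubgroup M)
    (hN : ∀ g, N ≤ N.comap (ρ g)) : MulAction G (M ⧸ N) where
  smul g := QuotientAddGroup.map N N (ρ g) (hN g)
  one_smul q := by
    induction q using QuotientAddGroup.induction_on with
    | H x =>
      change (QuotientAddGroup.mk (ρ 1 x) : M ⧸ N) = x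
      rw [map_one]
      rfl
  mul_smul g h q := by
    induction q using QuotientAddGroup.induction_on with
    | H x =>
      change (QuotientAddGroup.mk (ρ (g * h) x) : M ⧸ N) = QuotientAddGroup.mk (ρ g (ρ h x))
      rw [map_mul]
      rfl

variable {ρ : G →* AddMonoid.End M} {i : ℕ} {x : M}

theorem mem_fixedSeries_succ :
    x ∈ fixedSeries ρ (i + 1) ↔ ∀ g, ρ g x - x ∈ fixedSeries ρ i := by
  simp only [fixedSeries, AddSubgroup.mem_iInf, AddSubgroup.mem_comap]
  rfl

theorem fixedSeries_le_succ : ∀ i, fixedSeries ρ i ≤ fixedSeries ρ (i + 1)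
  | 0 => bot_le
  | i + 1 => fun _ hx => mem_fixedSeries_succ.2 fun g =>
      fixedSeries_le_succ i (mem_fixedSeries_succ.1 hx g)

theorem map_mem_fixedSeries (g : G) : ∀ {i x}, x ∈ fixedSeries ρ i → ρ g x ∈ fixedSeries ρ i
  | 0, x, hx => by
    rw [show x = 0 from hx, map_zero]
    exact zero_mem _
  | i + 1, x, hx => mem_fixedSeries_succ.2 fun h => by
    have hconj : ρ g * ρ (g⁻¹ * h * g) = ρ h * ρ g := by
      rw [← map_mul, ← map_mul, mul_assoc, mul_inv_cancel_left]
    have key : ρ h (ρ g x) - ρ g x = ρ g (ρ (g⁻¹ * h * g) x - x) := by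
      rw [map_sub, ← Function.comp_apply (f := ρ g), ← AddMonoid.End.coe_mul, hconj]
      rfl
    rw [key]
    exact map_mem_fixedSeries g (mem_fixedSeries_succ.1 hx _)

theorem sub_one_pow_mem_fixedSeries (g : G) {j : ℕ} (hj : 1 ≤ j)
    (hx : x ∈ fixedSeries ρ (i + 1)) : ((ρ g - 1) ^ j) x ∈ fixedSeries ρ i := by
  induction j, hj using Nat.le_induction with
  | base => exact mem_fixedSeries_succ.1 hx g
  | succ j _ ih =>
    rw [pow_succ', AddMonoid.End.coe_mul, Function.comp_apply]
    exact mem_fixedSeries_succ.1 (fixedSeries_le_succ i ih) g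

theorem sub_one_pow_apply_eq_zero (g : G) :
    ∀ {i x}, x ∈ fixedSeries ρ i → ((ρ g - 1) ^ i) x = 0
  | 0, _, hx => hx
  | i + 1, x, hx => by
    rw [pow_succ, AddMonoid.End.coe_mul, Function.comp_apply]
    exact sub_one_pow_apply_eq_zero g (mem_fixedSeries_succ.1 hx g)

variable {p n : ℕ} [hp : Fact p.Prime]

theorem fixedSeries_lt_succ (hG : IsPGroup p G) (hM : Nat.card M = p ^ n)
    (hi : fixedSeries ρ i ≠ ⊤) : fixedSeries ρ i < fixedSeries ρ (i + 1) := by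
  have : Finite M := Nat.finite_of_card_ne_zero (by rw [hM]; exact pow_ne_zero _ hp.out.ne_zero)
  let _ := quotientMulAction ρ (fixedSeries ρ i) fun g _ => map_mem_fixedSeries g
  have hdvd : p ∣ Nat.card (M ⧸ fixedSeries ρ i) := by
    obtain ⟨k, -, hk⟩ := (Nat.dvd_prime_pow hp.out).1 (hM ▸ (fixedSeries ρ i).index_dvd_card)
    have hk0 : k ≠ 0 := by
      rintro rfl
      exact hi (AddSubgroup.index_eq_one.1 (by rw [hk, pow_zero]))
    rw [← AddSubgroup.index, hk]
    exact dvd_pow_self p hk0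
  obtain ⟨q, hq, hq0⟩ := hG.exists_fixed_point_of_prime_dvd_card_of_fixed_point _ hdvd
    (a := 0) fun g => map_zero (QuotientAddGroup.map _ _ (ρ g) _)
  obtain ⟨x, rfl⟩ := QuotientAddGroup.mk_surjective q
  refine SetLike.lt_iff_le_and_exists.2 ⟨fixedSeries_le_succ i, x,
    mem_fixedSeries_succ.2 fun g => QuotientAddGroup.eq_iff_sub_mem.1 (hq g), fun hx => hq0 ?_⟩
  exact ((QuotientAddGroup.eq_zero_iff x).2 hx).symm

theorem fixedSeries_eq_top (hG : IsPGroup p G) (hM : Nat.card M = p ^ n) :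
    fixedSeries ρ n = ⊤ :=
  AddSubgroup.eq_top_of_lt_succ hp.out hM _ fixedSeries_le_succ fun _ => fixedSeries_lt_succ hG hM

theorem sub_one_pow_eq_zero (hG : IsPGroup p G) (hM : Nat.card M = p ^ n) (g : G) :
    (ρ g - 1) ^ n = 0 :=
  AddMonoidHom.ext fun _ => sub_one_pow_apply_eq_zero g (by rw [fixedSeries_eq_top hG hM]; trivial)

end FixedSeries

theorem pow_smul_eq_zero_of_card {A : Type*} [AddGroup A] {p n m : ℕ} (hcard : Nat.card A = p ^ n)
    (hm : n ≤ m) (c : A) : p ^ m • c = 0 := by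
  obtain ⟨k, rfl⟩ := Nat.exists_eq_add_of_le hm
  rw [pow_add, mul_comm, mul_smul, ← hcard, card_nsmul_eq_zero', smul_zero]

theorem exists_wEval_eq_pow_smul {α β : Type*} [DecidableEq α] [AddMonoid β] (m : ℕ)
    (op : β → β → β) (hop : ∀ j k a b, ∃ c, op (m ^ j • a) (m ^ k • b) = m ^ (j + k) • c)
    (x : α → β) (s : Finset α) (hs : ∀ t ∈ s, ∃ a, x t = m • a) (w : FreeMagma α) :
    ∃ c, wEval op x w = m ^ (wLeaves w).countP (fun t => decide (t ∈ s)) • c := by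
  induction w with
  | ih1 t =>
    by_cases ht : t ∈ s
    · obtain ⟨a, ha⟩ := hs t ht
      exact ⟨a, by simpa [wEval, wLeaves, ht] using ha⟩
    · exact ⟨x t, by simp [wEval, wLeaves, ht]⟩
  | ih2 u v ihu ihv =>
    obtain ⟨a, ha⟩ := ihu
    obtain ⟨b, hb⟩ := ihv
    obtain ⟨c, hc⟩ := hop _ _ a b
    refine ⟨c, ?_⟩
    change op (wEval op x u) (wEval op x v) = m ^ (wLeaves u ++ wLeaves v).countP _ • c
    rw [List.countP_append, ← hc, ha, hb]

namespace LeftBrace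

variable {A : Type u} [AddCommGroup A] (B : LeftBrace A)

theorem circ_zero (a : A) : B.circ a 0 = a := by
  have h := B.circ_add a 0 0
  rw [add_zero] at h
  exact (add_left_cancel h).symm

theorem one_eq_zero : B.one = 0 :=
  (B.circ_zero B.one).symm.trans (B.one_circ 0)

def lam (a : A) : AddMonoid.End A where
  toFun x := B.circ a x - a
  map_zero' := by simp only [circ_zero, sub_self]
  map_add' x y := by
    rw [eq_sub_of_add_eq (B.circ_add a x y)]
    abel

theorem lam_apply (a x : A) : B.lam a x = B.circ a x - a := rfl

theorem circ_eq_add_lam (a x : A) : B.circ a x = a + B.lam a x := by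
  rw [lam_apply, add_sub_cancel]

theorem star_eq_lam_sub_one (a b : A) : B.star a b = (B.lam a - 1) b := rfl

theorem lam_zero : B.lam 0 = 1 := AddMonoidHom.ext fun x => by
  change B.circ 0 x - 0 = x
  rw [← B.one_eq_zero, B.one_circ, B.one_eq_zero, sub_zero]

theorem lam_circ (a b : A) : B.lam (B.circ a b) = B.lam a * B.lam b := AddMonoidHom.ext fun x => by
  change B.circ (B.circ a b) x - B.circ a b = B.lam a (B.circ b x - b)
  rw [map_sub, lam_apply, lam_apply, B.circ_assoc]
  abel

theorem inv_eq_neg_lam (a : A) : B.inv a = -B.lam (B.inv a) a := by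
  rw [lam_apply, B.inv_circ, one_eq_zero]
  abel

theorem circ_nsmul_nsmul (m : ℕ) (a b : A) :
    B.circ (m • a) (m • b) = m • (a + B.lam (m • a) b) := by
  rw [circ_eq_add_lam, map_nsmul, smul_add]

theorem inv_nsmul (m : ℕ) (a : A) : B.inv (m • a) = m • -B.lam (B.inv (m • a)) a := by
  rw [smul_neg, ← map_nsmul]
  exact B.inv_eq_neg_lam _

structure Circ (B : LeftBrace A) : Type u where
  val : A

instance : Group B.Circ where
  mul g h := ⟨B.circ g.val h.val⟩
  one := ⟨B.one⟩
  inv g := ⟨B.inv g.val⟩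
  mul_assoc g h k := congrArg Circ.mk (B.circ_assoc g.val h.val k.val)
  one_mul g := congrArg Circ.mk (B.one_circ g.val)
  mul_one g := congrArg Circ.mk (B.circ_one g.val)
  inv_mul_cancel g := congrArg Circ.mk (B.inv_circ g.val)

variable {B}

theorem Circ.val_mul (g h : B.Circ) : (g * h).val = B.circ g.val h.val := rfl

variable (B)

theorem card_circ : Nat.card B.Circ = Nat.card A :=
  Nat.card_congr ⟨Circ.val, Circ.mk, fun _ => rfl, fun _ => rfl⟩

def lamHom : B.Circ →* AddMonoid.End A where
  toFun g := B.lam g.val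
  map_one' := by
    change B.lam B.one = 1
    rw [one_eq_zero, lam_zero]
  map_mul' g h := B.lam_circ g.val h.val

theorem circ_lam_inv (u : B.Circ) (z : A) : B.circ u.val (B.lam u⁻¹.val z) = u.val + z := by
  have h : B.lam u.val * B.lam u⁻¹.val = 1 := by
    change B.lamHom u * B.lamHom u⁻¹ = 1
    rw [← map_mul, mul_inv_cancel, map_one]
  rw [circ_eq_add_lam, ← Function.comp_apply (f := B.lam u.val), ← AddMonoid.End.coe_mul, h]
  rfl

theorem val_pow (b : A) (k : ℕ) :
    ((⟨b⟩ : B.Circ) ^ k).val = (∑ j ∈ range k, k.choose (j + 1) • (B.lam b - 1) ^ j) b := by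
  rw [← sum_range_one_add_pow, add_sub_cancel]
  induction k with
  | zero => exact B.one_eq_zero
  | succ k ih =>
    rw [pow_succ', Circ.val_mul, ih, circ_eq_add_lam, geom_sum_succ, add_comm]
    rfl

-- `/ p` is exact for `j + 1 < p`; the term `j = p - 1` gets coefficient `0`.
def powCorrection (p : ℕ) (b : A) : AddMonoid.End A :=
  ∑ j ∈ Ico 1 p, (p.choose (j + 1) / p) • (B.lam b - 1) ^ j

theorem powCorrection_mem_fixedSeries {p i : ℕ} {b x : A} (hx : x ∈ fixedSeries B.lamHom (i + 1)) :
    B.powCorrection p b x ∈ fixedSeries B.lamHom i := by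
  have hsum : B.powCorrection p b x = ∑ j ∈ Ico 1 p, ((p.choose (j + 1) / p) • (B.lam b - 1) ^ j) x :=
    AddMonoidHom.finsetSum_apply _ _ _
  rw [hsum]
  exact sum_mem fun j hj => AddSubgroup.nsmul_mem _
    (sub_one_pow_mem_fixedSeries (ρ := B.lamHom) ⟨b⟩ (mem_Ico.1 hj).1 hx) _

variable {p n : ℕ}

theorem val_pow_prime (hp : p.Prime) (b : A) (hN : (B.lam b - 1) ^ (p - 1) = 0) :
    ((⟨b⟩ : B.Circ) ^ p).val = p • (b + B.powCorrection p b b) := by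
  have hsum : ∑ j ∈ Ico 1 p, p.choose (j + 1) • (B.lam b - 1) ^ j = p • B.powCorrection p b := by
    refine (sum_congr rfl fun j hj => ?_).trans smul_sum.symm
    rcases Nat.lt_or_ge (j + 1) p with h | h
    · conv_lhs => rw [← Nat.mul_div_cancel' (hp.dvd_choose_self (by omega) h)]
      exact mul_smul _ _ _
    · obtain rfl : j = p - 1 := by have := (mem_Ico.1 hj).2; omega
      simp [hN]
  rw [val_pow, range_eq_Ico, sum_eq_sum_Ico_succ_bot hp.pos, zero_add, hsum, pow_zero,
    Nat.choose_one_right]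
  change p • b + p • B.powCorrection p b b = _
  rw [smul_add]

theorem smul_eq_circ_pow_prime (hp : p.Prime) (b : A) (hN : (B.lam b - 1) ^ (p - 1) = 0) :
    p • b = B.circ ((⟨b⟩ : B.Circ) ^ p).val
      (p • -B.lam ((⟨b⟩ : B.Circ) ^ p)⁻¹.val (B.powCorrection p b b)) := by
  rw [smul_neg, ← map_nsmul, ← map_neg, circ_lam_inv, B.val_pow_prime hp b hN, smul_add]
  abel

theorem isPGroup_circ (hcard : Nat.card A = p ^ n) : IsPGroup p B.Circ :=
  IsPGroup.of_card (by rw [card_circ, hcard])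

theorem lam_sub_one_pow_eq_zero (hp : p.Prime) (hcard : Nat.card A = p ^ n) {m : ℕ} (hm : n ≤ m)
    (b : A) : (B.lam b - 1) ^ m = 0 := by
  have : Fact p.Prime := ⟨hp⟩
  exact pow_eq_zero_of_le hm
    (sub_one_pow_eq_zero (ρ := B.lamHom) (B.isPGroup_circ hcard) hcard ⟨b⟩)

theorem exists_lam_val_pow_prime (hp : p.Prime) {t : ℕ} {b : A} {ψ : AddMonoid.End A}
    (hN : (B.lam (p ^ t • b) - 1) ^ (p - 1) = 0) (hψ : B.lam (p ^ t • b) = 1 + p ^ t • ψ) :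
    ∃ χ, B.lam ((⟨p ^ t • b⟩ : B.Circ) ^ p).val = 1 + p ^ (t + 1) • χ := by
  change ∃ χ, B.lamHom _ = _
  rw [map_pow]
  change ∃ χ, B.lam (p ^ t • b) ^ p = _
  rw [hψ]
  refine exists_one_add_smul_pow_prime hp t ψ ?_
  rcases Nat.eq_zero_or_pos t with rfl | ht
  · have hψ' : ψ = B.lam (p ^ 0 • b) - 1 := by
      rw [hψ, pow_zero, one_smul, add_sub_cancel_left]
    exact .inl (hψ' ▸ pow_eq_zero_of_le (Nat.sub_le p 1) hN)
  · exact .inr ht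

theorem exists_lam_pow_smul_eq (hp : p.Prime) (hcard : Nat.card A = p ^ n) (hpn : n < p)
    (t : ℕ) (y : A) : ∃ ψ : AddMonoid.End A, B.lam (p ^ t • y) = 1 + p ^ t • ψ := by
  have : Fact p.Prime := ⟨hp⟩
  have hN (b : A) : (B.lam b - 1) ^ (p - 1) = 0 := B.lam_sub_one_pow_eq_zero hp hcard (by omega) b
  induction t generalizing y with
  | zero => exact ⟨B.lam y - 1, by rw [pow_zero, one_smul, one_smul, add_sub_cancel]⟩
  | succ t ih =>
    suffices key : ∀ i, ∀ b : A, p ^ t • b ∈ fixedSeries B.lamHom i →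
        ∃ ψ, B.lam (p • p ^ t • b) = 1 + p ^ (t + 1) • ψ by
      simpa only [pow_succ', mul_smul] using
        key n y (by rw [fixedSeries_eq_top (B.isPGroup_circ hcard) hcard]; trivial)
    intro i
    induction i with
    | zero =>
      intro b hb
      exact ⟨0, by simp [show p ^ t • b = 0 from hb, lam_zero]⟩
    | succ i ihi =>
      intro b hb
      obtain ⟨ψ₀, hψ₀⟩ := ih b
      obtain ⟨ψ₁, hψ₁⟩ := B.exists_lam_val_pow_prime hp (hN _) hψ₀
      set u : B.Circ := ⟨p ^ t • b⟩ ^ p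
      set v := -B.lam u⁻¹.val (B.powCorrection p (p ^ t • b) b)
      have hv : p ^ t • v = -B.lam u⁻¹.val (B.powCorrection p (p ^ t • b) (p ^ t • b)) := by
        rw [smul_neg, map_nsmul, map_nsmul]
      obtain ⟨ψ₂, hψ₂⟩ := ihi v (hv ▸ neg_mem (map_mem_fixedSeries (ρ := B.lamHom) u⁻¹
        (B.powCorrection_mem_fixedSeries hb)))
      rw [B.smul_eq_circ_pow_prime hp _ (hN _), ← hv, lam_circ, hψ₁, hψ₂]
      exact exists_one_add_smul_mul _ _ _

theorem exists_star_pow_smul_eq (hp : p.Prime) (hcard : Nat.card A = p ^ n) (hpn : n < p)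
    (j k : ℕ) (a b : A) : ∃ c, B.star (p ^ j • a) (p ^ k • b) = p ^ (j + k) • c := by
  obtain ⟨ψ, hψ⟩ := B.exists_lam_pow_smul_eq hp hcard hpn j a
  refine ⟨ψ b, ?_⟩
  rw [star_eq_lam_sub_one, hψ, add_sub_cancel_left, pow_add, mul_smul]
  change p ^ j • ψ (p ^ k • b) = _
  rw [map_nsmul]

end LeftBrace

/-- `pA` is a sub-brace of `A`; every `*`-product (any bracketing) of `p−1`
elements of `pA` is zero; every `*`-product of elements of `A` in which at least `i` of
the factors lie in `pA` lies in `p^i·A`; hence every such product in which `p−1` of the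
factors lie in `pA` is zero. -/
theorem stmt_16 (p n : ℕ) (hp : p.Prime) (hpn : n + 1 < p)
    (A : Type u) [AddCommGroup A] (B : LeftBrace A) (hcard : Nat.card A = p ^ n) :
    ∀ pA : Set A, pA = {x : A | ∃ a : A, x = p • a} →
      -- pA is a sub-brace of A
      (((0 : A) ∈ pA ∧ (∀ x ∈ pA, ∀ y ∈ pA, x + y ∈ pA) ∧ (∀ x ∈ pA, -x ∈ pA)) ∧
        (B.one ∈ pA ∧ (∀ x ∈ pA, ∀ y ∈ pA, B.circ x y ∈ pA) ∧ (∀ x ∈ pA, B.inv x ∈ pA))) ∧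
      -- any bracketing of p−1 elements of pA multiplies (under *) to zero
      (∀ (k : ℕ) (w : FreeMagma (Fin k)) (x : Fin k → A),
        (∀ t : Fin k, x t ∈ pA) → (wLeaves w).length = p - 1 →
        wEval B.star x w = 0) ∧
      -- a product with at least i factors from pA lies in p^i·A
      (∀ (k : ℕ) (w : FreeMagma (Fin k)) (x : Fin k → A) (s : Finset (Fin k)) (i : ℕ),
        (∀ t ∈ s, x t ∈ pA) → i ≤ (wLeaves w).countP (fun t => decide (t ∈ s)) →
        ∃ a : A, wEval B.star x w = p ^ i • a) ∧
      -- a product with p−1 factors from pA is zero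
      (∀ (k : ℕ) (w : FreeMagma (Fin k)) (x : Fin k → A) (s : Finset (Fin k)),
        (∀ t ∈ s, x t ∈ pA) → p - 1 ≤ (wLeaves w).countP (fun t => decide (t ∈ s)) →
        wEval B.star x w = 0) := by
  rintro pA rfl
  have hword k (x : Fin k → A) s (hs : ∀ t ∈ s, ∃ a, x t = p • a) w :=
    exists_wEval_eq_pow_smul p B.star (B.exists_star_pow_smul_eq hp hcard (by omega)) x s hs w
  have hzero : ∀ m, p - 1 ≤ m → ∀ c : A, p ^ m • c = 0 := fun m hm =>
    pow_smul_eq_zero_of_card hcard (by omega)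
  refine ⟨⟨⟨⟨0, (smul_zero _).symm⟩, ?_, ?_⟩, ⟨0, by rw [B.one_eq_zero, smul_zero]⟩, ?_, ?_⟩,
    ?_, ?_, ?_⟩
  · rintro _ ⟨a, rfl⟩ _ ⟨b, rfl⟩
    exact ⟨a + b, (smul_add _ _ _).symm⟩
  · rintro _ ⟨a, rfl⟩
    exact ⟨-a, (smul_neg _ _).symm⟩
  · rintro _ ⟨a, rfl⟩ _ ⟨b, rfl⟩
    exact ⟨_, B.circ_nsmul_nsmul p a b⟩
  · rintro _ ⟨a, rfl⟩
    exact ⟨_, B.inv_nsmul p a⟩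
  · intro k w x hx hlen
    obtain ⟨c, hc⟩ := hword k x univ (fun t _ => hx t) w
    rw [hc, List.countP_eq_length.2 (by simp), hlen]
    exact hzero _ le_rfl c
  · intro k w x s i hs hi
    obtain ⟨c, hc⟩ := hword k x s hs w
    exact ⟨p ^ (_ - i) • c, by rw [hc, smul_smul, ← pow_add, Nat.add_sub_cancel' hi]⟩
  · intro k w x s hs hcnt
    obtain ⟨c, hc⟩ := hword k x s hs w
    rw [hc]
    exact hzero _ hcnt c
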